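/- Let K be a simplicial complex on the index set [n] such that every vertex {i}, 1 ≤ i ≤ n, is in K. Then the inclusion X_1 × ⋯ × X_n → (CX,X)^K is null homotopic. -/

import Mathlib

noncomputable section

open ContinuousMap

/-! ### Basic point-set constructions -/

/-- The quotient of `X` collapsing the subset `S` to a single point. -/
abbrev Collapse {X : Type*} [TopologicalSpace X] (S : Set X) : Type _ :=
  Quot (fun a b : X => a ∈ S ∧ b ∈ S)

namespace Collapse

variable {X Y : Type*} [TopologicalSpace X] [TopologicalSpace Y]

/-- The quotient map. -/
def mk (S : Set X) (x : X) : Collapse S := Quot.mk _ x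

lemma continuous_mk {S : Set X} : Continuous (mk S) := continuous_quot_mk

/-- The quotient map as a continuous map. -/
def mkCM (S : Set X) : C(X, Collapse S) := ⟨mk S, continuous_mk⟩

/-- A continuous map sending `S` into `T` descends to the collapsed spaces. -/
def desc {S : Set X} {T : Set Y} (f : C(X, Y)) (h : Set.MapsTo f S T) :
    C(Collapse S, Collapse T) :=
  ⟨Quot.lift (fun x => mk T (f x)) (fun a b hab => Quot.sound ⟨h hab.1, h hab.2⟩),
    continuous_quot_lift _ (continuous_mk.comp f.continuous)⟩

end Collapse

/-- The (unreduced) cone on a space: `CX = (X × I)/(X × {1})`, containing `X`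
as the subspace `X × {0}`. -/
abbrev Cone (X : Type*) [TopologicalSpace X] : Type _ :=
  Collapse {p : X × unitInterval | p.2 = 1}

/-- The canonical inclusion of the base `X` into the cone `CX`. -/
def Cone.incl {X : Type*} [TopologicalSpace X] : C(X, Cone X) :=
  ⟨fun x => Collapse.mk _ (x, 0),
    Collapse.continuous_mk.comp (continuous_id.prodMk continuous_const)⟩

/-- The join `A ∗ B = A × I × B / ∼`, where `(a, 0, b) ∼ (a, 0, b')` and
`(a, 1, b) ∼ (a', 1, b)`. -/
abbrev Join (A B : Type*) [TopologicalSpace A] [TopologicalSpace B] : Type _ :=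
  Quot (fun p q : A × unitInterval × B =>
    (p.2.1 = 0 ∧ q.2.1 = 0 ∧ p.1 = q.1) ∨ (p.2.1 = 1 ∧ q.2.1 = 1 ∧ p.2.2 = q.2.2))

/-- Points of the join. -/
def Join.mk {A B : Type*} [TopologicalSpace A] [TopologicalSpace B]
    (a : A) (t : unitInterval) (b : B) : Join A B :=
  Quot.mk _ (a, t, b)

/-- The join of a finite family of spaces: formal convex combinations
`t₁ x₁ + ⋯ + tₙ xₙ`, where the coordinate `xᵢ` is irrelevant when `tᵢ = 0`. -/
abbrev JoinFamily {ι : Type*} [Fintype ι] (Y : ι → Type*) [∀ i, TopologicalSpace (Y i)] :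
    Type _ :=
  Quot (fun p q : (∀ i, Y i) × (stdSimplex ℝ ι) =>
    p.2 = q.2 ∧ ∀ i, (p.2 : ι → ℝ) i ≠ 0 → p.1 i = q.1 i)

/-- Points of the join of a family. -/
def JoinFamily.mk {ι : Type*} [Fintype ι] {Y : ι → Type*} [∀ i, TopologicalSpace (Y i)]
    (y : ∀ i, Y i) (t : stdSimplex ℝ ι) : JoinFamily Y :=
  Quot.mk _ (y, t)

/-- The vertex of the standard simplex corresponding to `i₀`. -/
def stdSimplexVertex {ι : Type*} [Fintype ι] [DecidableEq ι] (i₀ : ι) : stdSimplex ℝ ι :=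
  ⟨fun j => if j = i₀ then 1 else 0,
    fun j => by dsimp only; split <;> norm_num, by simp⟩

/-- The smash product `A ∧ B = (A × B)/(A ∨ B)`. -/
abbrev Smash (A B : Type*) [TopologicalSpace A] [TopologicalSpace B] (a₀ : A) (b₀ : B) :
    Type _ :=
  Collapse {p : A × B | p.1 = a₀ ∨ p.2 = b₀}

/-- The right half-smash `A ⋊ B = (A × B)/(∗ × B)`. -/
abbrev RHalfSmash (A B : Type*) [TopologicalSpace A] [TopologicalSpace B] (a₀ : A) : Type _ :=
  Collapse {p : A × B | p.1 = a₀}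

/-- The left half-smash `A ⋉ B = (A × B)/(A × ∗)`. -/
abbrev LHalfSmash (A B : Type*) [TopologicalSpace A] [TopologicalSpace B] (b₀ : B) : Type _ :=
  Collapse {p : A × B | p.2 = b₀}

/-- The reduced suspension `ΣA = (A × I)/(A × {0} ∪ A × {1} ∪ {a₀} × I)`. -/
abbrev Susp (A : Type*) [TopologicalSpace A] (a₀ : A) : Type _ :=
  Collapse {p : A × unitInterval | p.1 = a₀ ∨ p.2 = 0 ∨ p.2 = 1}

/-- The basepoint of the reduced suspension. -/
def Susp.pt (A : Type*) [TopologicalSpace A] (a₀ : A) : Susp A a₀ :=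
  Collapse.mk _ (a₀, 0)

/-- The map `Σf` induced on reduced suspensions by a pointed map `f`. -/
def Susp.map {A B : Type*} [TopologicalSpace A] [TopologicalSpace B] {a₀ : A} {b₀ : B}
    (f : C(A, B)) (hf : f a₀ = b₀) : C(Susp A a₀, Susp B b₀) :=
  Collapse.desc ⟨fun p => (f p.1, p.2), (f.continuous.comp continuous_fst).prodMk continuous_snd⟩
    (fun p hp => by
      rcases hp with h | h
      · exact Or.inl (by simp [h, hf])
      · exact Or.inr h)

/-- The `m`-fold reduced suspension
`Σ^m A = (A × I^m)/(A × ∂(I^m) ∪ {a₀} × I^m)`. -/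
abbrev iSusp (m : ℕ) (A : Type*) [TopologicalSpace A] (a₀ : A) : Type _ :=
  Collapse {p : A × (Fin m → unitInterval) | p.1 = a₀ ∨ ∃ j, p.2 j = 0 ∨ p.2 j = 1}

/-- The smash product of a finite family of pointed spaces:
`⋀ᵢ Yᵢ = (∏ᵢ Yᵢ)/(fat wedge)`. -/
abbrev bigSmash {ι : Type*} (Y : ι → Type*) [∀ i, TopologicalSpace (Y i)]
    (pt : ∀ i, Y i) : Type _ :=
  Collapse {f : ∀ i, Y i | ∃ i, f i = pt i}

/-- The wedge sum `A ∨ B`. -/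
abbrev Wedge (A B : Type*) [TopologicalSpace A] [TopologicalSpace B] (a₀ : A) (b₀ : B) :
    Type _ :=
  Collapse {x : A ⊕ B | x = Sum.inl a₀ ∨ x = Sum.inr b₀}

/-- The wedge of a family of spaces, each with a designated basepoint set `S i`
(each `S i` should be a single point of `Y i`, possibly presented as a subset);
an extra disjoint point is wedged on so that the empty wedge is a point. -/
abbrev BigWedge {ι : Type*} (Y : ι → Type*) [∀ i, TopologicalSpace (Y i)]
    (S : ∀ i, Set (Y i)) : Type _ :=
  Collapse {p : (Σ i, Y i) ⊕ Unit |
    Sum.elim (fun q : Σ i, Y i => q.2 ∈ S q.1) (fun _ => True) p}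

/-- The double mapping cylinder (homotopy pushout) of `f : X → Y` and `g : X → Z`. -/
abbrev DblCyl {X Y Z : Type*} [TopologicalSpace X] [TopologicalSpace Y] [TopologicalSpace Z]
    (f : C(X, Y)) (g : C(X, Z)) : Type _ :=
  Quot (fun a b : Y ⊕ (X × unitInterval) ⊕ Z =>
    (∃ x, a = Sum.inl (f x) ∧ b = Sum.inr (Sum.inl (x, 0))) ∨
    (∃ x, a = Sum.inr (Sum.inr (g x)) ∧ b = Sum.inr (Sum.inl (x, 1))))

/-- The homotopy cofibre (mapping cone) of `f : X → Y`. -/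
abbrev hCofiber {X Y : Type*} [TopologicalSpace X] [TopologicalSpace Y] (f : C(X, Y)) :
    Type _ :=
  DblCyl f (ContinuousMap.const X PUnit.unit)

/-- The basepoint (cone point) of the homotopy cofibre. -/
def hCofiber.pt {X Y : Type*} [TopologicalSpace X] [TopologicalSpace Y] (f : C(X, Y)) :
    hCofiber f :=
  Quot.mk _ (Sum.inr (Sum.inr PUnit.unit))

/-! ### Simplicial complexes and polyhedral products -/

/-- An (abstract) simplicial complex on the vertex set `ι`, allowing ghost vertices:
a downward closed collection of finite subsets of `ι` containing the empty face. -/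
def IsSimplicialComplex {ι : Type*} (K : Set (Finset ι)) : Prop :=
  ∅ ∈ K ∧ ∀ σ ∈ K, ∀ τ ⊆ σ, τ ∈ K

/-- `K` is shifted with respect to the order `r` on the vertices. -/
def ShiftedWrt {ι : Type*} [DecidableEq ι] (K : Set (Finset ι)) (r : ι → ι → Prop) : Prop :=
  ∀ σ ∈ K, ∀ ν ∈ σ, ∀ ν', r ν' ν → insert ν' (σ.erase ν) ∈ K

/-- `K` is shifted: there is an ordering of the vertices for which whenever `σ ∈ K`,
`ν ∈ σ` and `ν' < ν`, also `(σ - ν) ∪ ν' ∈ K`. -/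
def IsShifted {n : ℕ} (K : Set (Finset (Fin n))) : Prop :=
  ∃ e : Fin n ≃ Fin n, ShiftedWrt K (fun a b => e a < e b)

/-- For `σ ⊆ ι` and pairs `(Xᵢ, Aᵢ)`, the block `(X, A)^σ = ∏ Yᵢ` with `Yᵢ = Xᵢ` if
`i ∈ σ` and `Yᵢ = Aᵢ` otherwise, as a subset of `∏ᵢ Xᵢ`. -/
def polyPiece {ι : Type*} (σ : Finset ι) {X : ι → Type*} (A : ∀ i, Set (X i)) :
    Set (∀ i, X i) :=
  {f | ∀ i, i ∉ σ → f i ∈ A i}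

/-- The polyhedral product `(X, A)^K = ⋃_{σ ∈ K} (X, A)^σ` of the pairs `(Xᵢ, Aᵢ)`,
as a subset of `∏ᵢ Xᵢ`. -/
def polyProdXA {ι : Type*} (K : Set (Finset ι)) {X : ι → Type*} (A : ∀ i, Set (X i)) :
    Set (∀ i, X i) :=
  {f | ∃ σ ∈ K, ∀ i, i ∉ σ → f i ∈ A i}

/-- The polyhedral product `(CX, X)^K` of the pairs `(CXᵢ, Xᵢ)`, as a subset
of `∏ᵢ CXᵢ`. -/
def polyProd {ι : Type*} (K : Set (Finset ι)) (X : ι → Type*)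
    [∀ i, TopologicalSpace (X i)] : Set (∀ i, Cone (X i)) :=
  polyProdXA K (fun i => Set.range (Cone.incl (X := X i)))

/-- The canonical basepoint of `(CX, X)^K` (all coordinates at the basepoints,
included in the cones); it lies in the polyhedral product as soon as `∅ ∈ K`. -/
def polyProd.pt {ι : Type*} {K : Set (Finset ι)} {X : ι → Type*}
    [∀ i, TopologicalSpace (X i)] (pt : ∀ i, X i) (h : ∅ ∈ K) : ↥(polyProd K X) :=
  ⟨fun i => Cone.incl (pt i), ⟨∅, h, fun i _ => ⟨pt i, rfl⟩⟩⟩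

/-- The geometric realization of a simplicial complex `K` on the (finite) vertex set `ι`:
convex weightings of the vertices whose support is a face of `K`. -/
def geomReal {ι : Type*} [Fintype ι] (K : Set (Finset ι)) : Set (ι → ℝ) :=
  {w | (∀ v, 0 ≤ w v) ∧ (∑ v, w v = 1) ∧ ∃ σ ∈ K, {v | w v ≠ 0} = (σ : Set ι)}

/-! Reconstruction of the (since removed) Mathlib definition `CWComplex` of December 2024
(file `Mathlib/Topology/CWComplex.lean`), with its original meaning. -/

namespace RelativeCWComplex

/-- The n-dimensional sphere. -/
def sphere (n : ℤ) : TopCat.{u} :=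
  TopCat.of <| ULift <| Metric.sphere (0 : EuclideanSpace ℝ <| Fin <| Int.toNat <| n + 1) 1

/-- The n-dimensional closed disk. -/
def disk (n : ℤ) : TopCat.{u} :=
  TopCat.of <| ULift <| Metric.closedBall (0 : EuclideanSpace ℝ <| Fin <| Int.toNat n) 1

/-- The inclusion map from the n-sphere to the (n+1)-disk. -/
def sphereInclusion (n : ℤ) : sphere.{u} n ⟶ disk.{u} (n + 1) :=
  TopCat.ofHom
    ⟨fun x => ULift.up ⟨x.down.1, le_of_eq x.down.2⟩,
      continuous_uliftUp.comp ((continuous_subtype_val.comp continuous_uliftDown).subtype_mk _)⟩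

/-- The inclusion map from the disjoint union of S^n to the disjoint union of D^(n+1). -/
def sigmaSphereInclusion (n : ℤ) (cells : Type) :
    TopCat.of (Σ (_ : cells), sphere.{u} n) ⟶ TopCat.of (Σ (_ : cells), disk.{u} (n + 1)) :=
  TopCat.ofHom
    ⟨Sigma.map id fun _ x => sphereInclusion.{u} n x,
      Continuous.sigma_map fun _ => (sphereInclusion.{u} n).hom.continuous⟩

/-- The attaching map from the disjoint union of spheres. -/
def sigmaAttachMap (X : TopCat.{u}) (n : ℤ) (cells : Type)
    (attachMaps : cells → C(sphere.{u} n, X)) : TopCat.of (Σ (_ : cells), sphere.{u} n) ⟶ X :=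
  TopCat.ofHom
    ⟨fun ⟨i, x⟩ => attachMaps i x, continuous_sigma fun i => (attachMaps i).continuous⟩

/-- `X'` is obtained from `X` by attaching `(n + 1)`-disks. -/
structure AttachCells (X X' : TopCat.{u}) (n : ℤ) where
  cells : Type
  attachMaps : cells → C(sphere.{u} n, X)
  iso_pushout : X' ≅ CategoryTheory.Limits.pushout (sigmaSphereInclusion.{u} n cells)
    (sigmaAttachMap X n cells attachMaps)

end RelativeCWComplex

/-- A CW-complex relative to `A`; `sk i` is the `(i - 1)`-skeleton. -/
structure RelativeCWComplex (A : TopCat.{u}) where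
  sk : ℕ → TopCat.{u}
  sk_zero : sk 0 = A
  attachCells (n : ℕ) : RelativeCWComplex.AttachCells.{u} (sk n) (sk (n + 1)) (n - 1)

/-- A CW-complex. -/
abbrev CWComplex.{u} := RelativeCWComplex.{u} (TopCat.of PEmpty)

namespace RelativeCWComplex

/-- The inclusion of skeletons. -/
def inclusion {A : TopCat.{u}} (X : RelativeCWComplex.{u} A) (n : ℕ) : X.sk n ⟶ X.sk (n + 1) :=
  CategoryTheory.CategoryStruct.comp
    (CategoryTheory.Limits.pushout.inr (sigmaSphereInclusion.{u} ((n : ℤ) - 1) (X.attachCells n).cells)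
      (sigmaAttachMap (X.sk n) ((n : ℤ) - 1) (X.attachCells n).cells (X.attachCells n).attachMaps))
    (X.attachCells n).iso_pushout.inv

/-- The topological space underlying a (relative) CW-complex. -/
def toTopCat {A : TopCat.{u}} (X : RelativeCWComplex.{u} A) : TopCat.{u} :=
  CategoryTheory.Limits.colimit (CategoryTheory.Functor.ofSequence (inclusion X))

end RelativeCWComplex

/-- `X` is (homeomorphic to the geometric realization of) a CW-complex. -/
def IsCWComplex (X : Type u) [TopologicalSpace X] : Prop :=
  ∃ C : CWComplex.{u}, Nonempty (C.toTopCat ≃ₜ X)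

lemma polyProd_mono {ι : Type*} {K₁ K₂ : Set (Finset ι)} (h : K₁ ⊆ K₂)
    {X : ι → Type*} [∀ i, TopologicalSpace (X i)] :
    polyProd K₁ X ⊆ polyProd K₂ X :=
  fun _ ⟨τ, hτ, hf⟩ => ⟨τ, h hτ, hf⟩

/-- A membership criterion for `(CX, X)^K`: a point whose coordinates in `σ` come from a
point of `(CX, X)^{∂σ}` and whose coordinates outside of `σ` lie in `Xᵢ ⊆ CXᵢ` belongs to
`(CX, X)^K`, provided every proper face of `σ` belongs to `K`. -/
lemma mem_polyProd_of_boundary {ι : Type*}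
    {K : Set (Finset ι)} {σ : Finset ι} (hσ : ∀ τ, τ ⊂ σ → τ ∈ K)
    {X : ι → Type*} [∀ i, TopologicalSpace (X i)]
    (c : ↥(polyProd {τ : Finset ↥σ | τ ≠ Finset.univ} (fun i : ↥σ => X i)))
    (f : ∀ i, Cone (X i))
    (hf₁ : ∀ i (h : i ∈ σ), f i = c.1 ⟨i, h⟩)
    (hf₂ : ∀ i, i ∉ σ → f i ∈ Set.range (Cone.incl (X := X i))) :
    f ∈ polyProd K X := by
  obtain ⟨τ, hτ, hc⟩ := c.2
  refine ⟨τ.map (Function.Embedding.subtype _), ?_, ?_⟩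
  · refine hσ _ (lt_of_le_of_ne ?_ ?_)
    · intro i hi
      simp only [Finset.mem_map, Function.Embedding.coe_subtype] at hi
      obtain ⟨a, _, rfl⟩ := hi
      exact a.2
    · intro hρσ
      apply hτ
      refine Finset.eq_univ_iff_forall.mpr (fun a => ?_)
      have ha : (a : ι) ∈ τ.map (Function.Embedding.subtype _) := by
        rw [hρσ]; exact a.2
      simp only [Finset.mem_map, Function.Embedding.coe_subtype] at ha
      obtain ⟨b, hb, hba⟩ := ha
      exact (Subtype.ext hba) ▸ hb
  · intro i hi
    by_cases h : i ∈ σ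
    · rw [hf₁ i h]
      refine hc ⟨i, h⟩ (fun hmem => hi ?_)
      exact Finset.mem_map.mpr ⟨⟨i, h⟩, hmem, rfl⟩
    · exact hf₂ i h

/-- The canonical map `(CX, X)^{∂σ} × ∏_{i ∉ σ} Xᵢ ⟶ (CX, X)^K`, available whenever every
proper face of `σ` is a face of `K`. -/
def boundarySmashMap {ι : Type*} [DecidableEq ι] {K : Set (Finset ι)} {σ : Finset ι}
    (hσ : ∀ τ, τ ⊂ σ → τ ∈ K)
    (X : ι → Type*) [∀ i, TopologicalSpace (X i)] :
    C(↥(polyProd {τ : Finset ↥σ | τ ≠ Finset.univ} (fun i : ↥σ => X i)) ×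
        (∀ j : {j : ι // j ∉ σ}, X j),
      ↥(polyProd K X)) :=
  ⟨fun p => ⟨fun i => if h : i ∈ σ then p.1.1 ⟨i, h⟩ else Cone.incl (p.2 ⟨i, h⟩),
      mem_polyProd_of_boundary hσ p.1 _ (fun i h => dif_pos h)
        (fun i h => by rw [dif_neg h]; exact ⟨p.2 ⟨i, h⟩, rfl⟩)⟩,
    by
      apply Continuous.subtype_mk
      apply continuous_pi
      intro i
      by_cases h : i ∈ σ
      · simp only [dif_pos h]
        exact (continuous_apply _).comp (continuous_subtype_val.comp continuous_fst)
      · simp only [dif_neg h]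
        exact Cone.incl.continuous.comp ((continuous_apply _).comp continuous_snd)⟩

/-!
Each `Xᵢ` is null homotopic inside its cone `CXᵢ`, and since `{i} ∈ K` the `i`-th coordinate
of `(CX, X)^K` may run through `CXᵢ` while all the others stay in the `Xⱼ`. Contracting the
coordinates one at a time moves the inclusion of `X₁ × ⋯ × Xₙ` to the constant map at the
basepoint.
-/

namespace Cone

variable {X Y : Type*} [TopologicalSpace X] [TopologicalSpace Y]

def toApex : C(X, Cone X) :=
  ⟨fun x => Collapse.mk _ (x, 1),
    Collapse.continuous_mk.comp (continuous_id.prodMk continuous_const)⟩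

lemma toApex_eq (x y : X) : toApex x = toApex y :=
  Quot.sound ⟨rfl, rfl⟩

lemma incl_homotopic_toApex : (incl : C(X, Cone X)).Homotopic toApex :=
  ⟨{ toFun := fun p => Collapse.mk _ (p.2, p.1)
     continuous_toFun := Collapse.continuous_mk.comp continuous_swap
     map_zero_left := fun _ => rfl
     map_one_left := fun _ => rfl }⟩

theorem incl_comp_homotopic (f g : C(Y, X)) : (incl.comp f).Homotopic (incl.comp g) := by
  have hfg : toApex.comp f = toApex.comp g := ext fun y => toApex_eq (f y) (g y)
  have hf : (incl.comp f).Homotopic (toApex.comp g) :=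
    hfg ▸ incl_homotopic_toApex.comp (.refl f)
  exact hf.trans (incl_homotopic_toApex.comp (.refl g)).symm

end Cone

namespace polyProd

variable {ι : Type*} [DecidableEq ι] {K : Set (Finset ι)} {X : ι → Type*}
  [∀ i, TopologicalSpace (X i)] {Y : Type*} [TopologicalSpace Y]

def incl (hK : ∅ ∈ K) : C((∀ i, X i), ↥(polyProd K X)) :=
  ⟨fun f => ⟨fun i => Cone.incl (f i), ⟨∅, hK, fun i _ => ⟨f i, rfl⟩⟩⟩,
    Continuous.subtype_mk
      (continuous_pi fun i => Cone.incl.continuous.comp (continuous_apply i)) _⟩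

theorem incl_comp_homotopic_of_eqOn_compl_singleton (hK : ∅ ∈ K) {i : ι} (hi : {i} ∈ K)
    (g₀ g₁ : C(Y, ∀ j, X j)) (h : ∀ y, ∀ j ≠ i, g₀ y j = g₁ y j) :
    ((incl hK).comp g₀).Homotopic ((incl hK).comp g₁) := by
  obtain ⟨H⟩ := Cone.incl_comp_homotopic ((ContinuousMap.eval i).comp g₀)
    ((ContinuousMap.eval i).comp g₁)
  refine ⟨{
    toFun := fun p => ⟨Function.update (fun j => Cone.incl (g₀ p.2 j)) i (H p),
      ⟨{i}, hi, fun j hj => by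
        rw [Function.update_of_ne (by simpa using hj)]
        exact ⟨_, rfl⟩⟩⟩
    continuous_toFun := Continuous.subtype_mk
      ((continuous_pi fun j => Cone.incl.continuous.comp
        ((continuous_apply j).comp (g₀.continuous.comp continuous_snd))).update i
        H.continuous) _
    map_zero_left := fun y => Subtype.ext <| by
      simp only [H.apply_zero]
      exact Function.update_eq_self i _
    map_one_left := fun y => Subtype.ext <| funext fun j => by
      simp only [H.apply_one]
      rcases eq_or_ne j i with rfl | hj
      · simp [incl]
      · simp [Function.update_of_ne hj, incl, h y j hj] }⟩

theorem incl_comp_homotopic_of_eqOn_compl (hK : ∅ ∈ K) (s : Finset ι)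
    (hv : ∀ i ∈ s, {i} ∈ K) (g₀ g₁ : C(Y, ∀ j, X j))
    (h : ∀ y, ∀ j ∉ s, g₀ y j = g₁ y j) :
    ((incl hK).comp g₀).Homotopic ((incl hK).comp g₁) := by
  induction s using Finset.induction_on generalizing g₁ with
  | empty =>
    obtain rfl : g₀ = g₁ := ext fun y => funext fun j => h y j (Finset.notMem_empty j)
    exact .refl _
  | insert i s _ ih =>
    let g : C(Y, ∀ j, X j) :=
      ⟨fun y => Function.update (g₁ y) i (g₀ y i),
        g₁.continuous.update i ((continuous_apply i).comp g₀.continuous)⟩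
    have hg₀ : ((incl hK).comp g₀).Homotopic ((incl hK).comp g) := by
      refine ih (fun j hj => hv j (Finset.mem_insert_of_mem hj)) g fun y j hj => ?_
      rcases eq_or_ne j i with rfl | hji
      · simp [g]
      · simp [g, Function.update_of_ne hji, h y j (by simp [hji, hj])]
    exact hg₀.trans <| incl_comp_homotopic_of_eqOn_compl_singleton hK
      (hv i (Finset.mem_insert_self i s)) g g₁ fun y j hj => Function.update_of_ne hj _ _

end polyProd

theorem inclusion_polyProd_nullhomotopic_general {n : ℕ} (K : Set (Finset (Fin n)))
    (hK : IsSimplicialComplex K) (hv : ∀ i : Fin n, ({i} : Finset (Fin n)) ∈ K)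
    (X : Fin n → Type) [∀ i, TopologicalSpace (X i)]
    (pt : ∀ i, X i) :
    ContinuousMap.Nullhomotopic
      (⟨fun f => ⟨fun i => Cone.incl (f i), ⟨∅, hK.1, fun i _ => ⟨f i, rfl⟩⟩⟩,
          Continuous.subtype_mk
            (continuous_pi fun i => Cone.incl.continuous.comp (continuous_apply i)) _⟩ :
        C((∀ i, X i), ↥(polyProd K X))) :=
  ⟨polyProd.pt pt hK.1, polyProd.incl_comp_homotopic_of_eqOn_compl hK.1 Finset.univ
    (fun i _ => hv i) (ContinuousMap.id _) (ContinuousMap.const _ pt) (by simp)⟩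

/-- Corollary 3.5. If every vertex `{i}` is a face of `K`, then the
inclusion `X₁ × ⋯ × Xₙ = (CX, X)^∅ → (CX, X)^K` is null homotopic. -/
theorem inclusion_polyProd_nullhomotopic {n : ℕ} (K : Set (Finset (Fin n)))
    (hK : IsSimplicialComplex K) (hv : ∀ i : Fin n, ({i} : Finset (Fin n)) ∈ K)
    (X : Fin n → Type) [∀ i, TopologicalSpace (X i)]
    (pt : ∀ i, X i) (hCW : ∀ i, IsCWComplex (X i)) :
    ContinuousMap.Nullhomotopic
      (⟨fun f => ⟨fun i => Cone.incl (f i), ⟨∅, hK.1, fun i _ => ⟨f i, rfl⟩⟩⟩,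
          Continuous.subtype_mk
            (continuous_pi fun i => Cone.incl.continuous.comp (continuous_apply i)) _⟩ :
        C((∀ i, X i), ↥(polyProd K X))) :=
  inclusion_polyProd_nullhomotopic_general K hK hv X pt
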